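/- Let $A, H \in \mathbb{R}^{m\times m}$ with $H$ symmetric positive definite and $A$ invertible. Suppose there is a constant $\mu > 0$ such that $\theta^\top A \theta \geq \mu\, \theta^\top H \theta$ for all $\theta \in \mathbb{R}^m$. Then the operator norm of $H^{1/2} A^{-1} H^{1/2}$ is at most $1/\mu$. -/

import Mathlib

/-!
Put `S = H^{1/2}`, `M = S A⁻¹ S` and, for a vector `x`, `θ = A⁻¹ S x`. Then `S θ = M x` and
`A θ = S x`, so the coercivity hypothesis at `θ` reads `μ ‖M x‖² ≤ ⟪M x, x⟫ ≤ ‖M x‖ ‖x‖`,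
whence `‖M x‖ ≤ ‖x‖ / μ`.
-/

open Matrix

/-- The positive semidefinite square root of a positive semidefinite matrix, as defined in the
older Mathlib (`Matrix.PosSemidef.sqrt`, since removed). -/
noncomputable def Matrix.PosSemidef.sqrt {n : Type*} [Fintype n]
    [DecidableEq n] {A : Matrix n n ℝ} (hA : A.PosSemidef) : Matrix n n ℝ :=
  (hA.1.eigenvectorUnitary : Matrix n n ℝ) *
    diagonal ((RCLike.ofReal : ℝ → ℝ) ∘ (√·) ∘ hA.1.eigenvalues) *
    (star hA.1.eigenvectorUnitary : Matrix n n ℝ)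

open scoped RealInnerProductSpace

namespace Matrix.PosSemidef

variable {n : Type*} [Fintype n] [DecidableEq n] {B : Matrix n n ℝ}

theorem isSymm_sqrt (hB : B.PosSemidef) : hB.sqrt.IsSymm := by
  rw [IsSymm, ← conjTranspose_eq_transpose_of_trivial, sqrt, star_eq_conjTranspose]
  exact isHermitian_mul_mul_conjTranspose _ (isHermitian_diagonal _)

theorem sqrt_mul_self (hB : B.PosSemidef) : hB.sqrt * hB.sqrt = B := by
  have hU := Unitary.coe_star_mul_self hB.1.eigenvectorUnitary
  set U : Matrix n n ℝ := ↑hB.1.eigenvectorUnitary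
  set D := diagonal ((RCLike.ofReal : ℝ → ℝ) ∘ (√·) ∘ hB.1.eigenvalues)
  have hDD : D * D = diagonal ((RCLike.ofReal : ℝ → ℝ) ∘ hB.1.eigenvalues) := by
    rw [diagonal_mul_diagonal]
    congr 1 with i
    simp [Real.mul_self_sqrt (hB.eigenvalues_nonneg i)]
  conv_rhs => rw [hB.1.spectral_theorem, Unitary.conjStarAlgAut_apply]
  calc hB.sqrt * hB.sqrt = U * (D * (star U * U) * D) * star U := by
        simp only [sqrt, U, D, Matrix.mul_assoc]
    _ = _ := by rw [hU, Matrix.mul_one, hDD]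

end Matrix.PosSemidef

theorem ContinuousLinearMap.opNorm_le_one_div_of_mul_norm_sq_le_inner {E : Type*}
    [NormedAddCommGroup E] [InnerProductSpace ℝ E] (T : E →L[ℝ] E) {μ : ℝ} (hμ : 0 < μ)
    (h : ∀ x, μ * ‖T x‖ ^ 2 ≤ ⟪T x, x⟫) : ‖T‖ ≤ 1 / μ := by
  refine T.opNorm_le_bound (by positivity) fun x => ?_
  have hx : μ * ‖T x‖ * ‖T x‖ ≤ ‖x‖ * ‖T x‖ := by
    nlinarith [h x, real_inner_le_norm (T x) x]
  rcases (norm_nonneg (T x)).eq_or_lt with h0 | h0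
  · rw [← h0]; positivity
  · rw [one_div_mul_eq_div, le_div_iff₀ hμ, mul_comm]
    exact le_of_mul_le_mul_right hx h0

namespace Matrix

variable {n : Type*} [Fintype n]

theorem IsSymm.dotProduct_mulVec {S : Matrix n n ℝ} (hS : S.IsSymm) (u v : n → ℝ) :
    u ⬝ᵥ S *ᵥ v = S *ᵥ u ⬝ᵥ v := by
  rw [Matrix.dotProduct_mulVec, ← mulVec_transpose, hS]

variable [DecidableEq n]

theorem mul_dotProduct_self_le_of_coercive {A S : Matrix n n ℝ} (hA : IsUnit A)
    (hS : S.IsSymm) {μ : ℝ} (hlower : ∀ θ, μ * (θ ⬝ᵥ (S * S) *ᵥ θ) ≤ θ ⬝ᵥ A *ᵥ θ) (x : n → ℝ) :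
    μ * ((S * A⁻¹ * S) *ᵥ x ⬝ᵥ (S * A⁻¹ * S) *ᵥ x) ≤ (S * A⁻¹ * S) *ᵥ x ⬝ᵥ x := by
  set θ := A⁻¹ *ᵥ S *ᵥ x
  have hSθ : S *ᵥ θ = (S * A⁻¹ * S) *ᵥ x := by simp only [θ, mulVec_mulVec, Matrix.mul_assoc]
  have hAθ : A *ᵥ θ = S *ᵥ x := by
    rw [mulVec_mulVec, mul_nonsing_inv A ((isUnit_iff_isUnit_det A).mp hA), one_mulVec]
  calc μ * ((S * A⁻¹ * S) *ᵥ x ⬝ᵥ (S * A⁻¹ * S) *ᵥ x) = μ * (θ ⬝ᵥ (S * S) *ᵥ θ) := by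
        rw [← hSθ, ← mulVec_mulVec, hS.dotProduct_mulVec θ]
    _ ≤ θ ⬝ᵥ A *ᵥ θ := hlower θ
    _ = (S * A⁻¹ * S) *ᵥ x ⬝ᵥ x := by rw [hAθ, hS.dotProduct_mulVec, hSθ]

theorem mul_norm_toEuclideanCLM_sq_le_inner {M : Matrix n n ℝ} {μ : ℝ}
    (h : ∀ x, μ * (M *ᵥ x ⬝ᵥ M *ᵥ x) ≤ M *ᵥ x ⬝ᵥ x) (x : EuclideanSpace ℝ n) :
    μ * ‖toEuclideanCLM (𝕜 := ℝ) M x‖ ^ 2 ≤ ⟪toEuclideanCLM (𝕜 := ℝ) M x, x⟫ := by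
  rw [← real_inner_self_eq_norm_sq, inner_toEuclideanCLM, real_inner_comm, inner_toEuclideanCLM,
    ofLp_toEuclideanCLM, dotProduct_comm (WithLp.ofLp x)]
  exact h (WithLp.ofLp x)

end Matrix

/-- If `H` is symmetric positive definite, `A` is invertible, and
`θᵀ A θ ≥ μ θᵀ H θ` for all `θ` with `μ > 0`, then the Euclidean operator norm of
`H^{1/2} A⁻¹ H^{1/2}` is at most `1/μ`. -/
theorem stmt0 {m : ℕ} (A H : Matrix (Fin m) (Fin m) ℝ)
    (hH : H.PosDef) (hA : IsUnit A) (μ : ℝ) (hμ : 0 < μ)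
    (hlower : ∀ θ : Fin m → ℝ, μ * (θ ⬝ᵥ H.mulVec θ) ≤ θ ⬝ᵥ A.mulVec θ) :
    ‖Matrix.toEuclideanCLM (𝕜 := ℝ) (Matrix.PosSemidef.sqrt hH.posSemidef * A⁻¹ * Matrix.PosSemidef.sqrt hH.posSemidef)‖
      ≤ 1 / μ := by
  have hS := hH.posSemidef
  rw [← hS.sqrt_mul_self] at hlower
  exact ContinuousLinearMap.opNorm_le_one_div_of_mul_norm_sq_le_inner _ hμ
    (mul_norm_toEuclideanCLM_sq_le_inner
      (mul_dotProduct_self_le_of_coercive hA hS.isSymm_sqrt hlower))
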